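/- arXiv:2104.11439 — 3 statements merged into one kernel-verified Lean document; each statement's English description precedes it below -/
import Mathlib

section
/- Let R be a commutative Bézout domain of stable range 1.5, m ∈ R neither zero nor a unit, and R_m = R/mR. If two elements a, b ∈ R_m divide each other (a ∣ b and b ∣ a in R_m), then a and b are associates in R_m, i.e., a = b·u for some unit u of R_m. -/
/-- A commutative ring has stable range 1.5. -/
def HasStableRange15 (R : Type*) [CommRing R] : Prop :=
  ∀ a b c : R, c ≠ 0 → (∀ d : R, d ∣ a → d ∣ b → d ∣ c → IsUnit d) →
    ∃ r : R, ∀ d : R, d ∣ a + b * r → d ∣ c → IsUnit d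

/-!
Lift the data to `R`: `A ≡ B S` and `B ≡ A C` modulo `m`. Write `A = d A₁`, `m = d m₁` with
`d = gcd(A, m)`, so that `A₁` and `m₁` are coprime; then `d ∣ B`, say `B = d B₁`, and
`A₁ ≡ B₁ S` modulo `m₁`, so `S` is coprime to `m₁`. Since `B m₁ = m B₁ ≡ 0`, every
`S + m₁ r` still satisfies `A ≡ B (S + m₁ r)`, and stable range 1.5 chooses `r` making it
coprime to `m`, i.e. a unit modulo `m`.
-/

theorem IsCoprime.of_dvd_sub_mul {R : Type*} [CommRing R] {a b s n : R}
    (h : IsCoprime a n) (hdvd : n ∣ a - b * s) : IsCoprime s n := by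
  obtain ⟨w, hw⟩ := hdvd
  have : IsCoprime (b * s + w * n) n := by
    rwa [show b * s + w * n = a by linear_combination -hw]
  exact this.of_add_mul_right_left.of_mul_left_right

theorem Ideal.Quotient.isUnit_mk_of_isCoprime {R : Type*} [CommRing R] {x m : R}
    (h : IsCoprime x m) : IsUnit (Ideal.Quotient.mk (Ideal.span {m}) x) := by
  obtain ⟨p, q, hpq⟩ := h
  refine .of_mul_eq_one (Ideal.Quotient.mk _ p) ?_
  rw [← map_mul, ← map_one (Ideal.Quotient.mk _), Ideal.Quotient.eq, Ideal.mem_span_singleton]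
  exact ⟨-q, by linear_combination hpq⟩

theorem IsBezout.exists_eq_mul_eq_mul_isCoprime {R : Type*} [CommRing R] [IsDomain R]
    [IsBezout R] (a : R) {m : R} (hm : m ≠ 0) :
    ∃ d a' m', a = d * a' ∧ m = d * m' ∧ IsCoprime a' m' := by
  obtain ⟨a', ha⟩ := IsBezout.gcd_dvd_left a m
  obtain ⟨m', hm'⟩ := IsBezout.gcd_dvd_right a m
  obtain ⟨x, y, hxy⟩ := IsBezout.gcd_eq_sum a m
  have hd : IsBezout.gcd a m ≠ 0 := fun h => hm (by rw [hm', h, zero_mul])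
  refine ⟨_, a', m', ha, hm', x, y, mul_left_cancel₀ hd ?_⟩
  linear_combination hxy - x * ha - y * hm'

theorem HasStableRange15.exists_isCoprime_add_mul {R : Type*} [CommRing R] [IsBezout R]
    (hsr : HasStableRange15 R) {a b m : R} (hm : m ≠ 0) (h : IsRelPrime a b) :
    ∃ r, IsCoprime (a + b * r) m := by
  obtain ⟨r, hr⟩ := hsr a b m hm fun e ha hb _ => h ha hb
  exact ⟨r, IsRelPrime.isCoprime fun e h₁ h₂ => hr e h₁ h₂⟩

theorem HasStableRange15.exists_isCoprime_dvd_sub_mul {R : Type*} [CommRing R] [IsDomain R]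
    [IsBezout R] (hsr : HasStableRange15 R) {m A B C S : R} (hm : m ≠ 0)
    (hB : m ∣ B - A * C) (hA : m ∣ A - B * S) :
    ∃ s, IsCoprime s m ∧ m ∣ A - B * s := by
  obtain ⟨d, A₁, m₁, rfl, rfl, hcop⟩ := IsBezout.exists_eq_mul_eq_mul_isCoprime A hm
  have hd : d ≠ 0 := left_ne_zero_of_mul hm
  obtain ⟨B₁, rfl⟩ : d ∣ B :=
    (dvd_sub_left (dvd_mul_of_dvd_left (dvd_mul_right d A₁) C)).mp
      ((dvd_mul_right d m₁).trans hB)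
  have hS : IsCoprime S m₁ := by
    refine hcop.of_dvd_sub_mul (b := B₁) ((mul_dvd_mul_iff_left hd).mp ?_)
    simpa [mul_sub, mul_assoc] using hA
  obtain ⟨r, hr⟩ := hsr.exists_isCoprime_add_mul hm hS.isRelPrime
  refine ⟨_, hr, ?_⟩
  obtain ⟨w, hw⟩ := hA
  exact ⟨w - B₁ * r, by linear_combination hw⟩

theorem associates_of_dvd_dvd_quotient_general
    {R : Type*} [CommRing R] [IsDomain R] [IsBezout R]
    (hsr : HasStableRange15 R)
    (m : R) (hm0 : m ≠ 0)
    (a b : R ⧸ Ideal.span {m}) (hab : a ∣ b) (hba : b ∣ a) :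
    ∃ u : (R ⧸ Ideal.span {m})ˣ, a = b * u := by
  obtain ⟨A, rfl⟩ := Ideal.Quotient.mk_surjective a
  obtain ⟨B, rfl⟩ := Ideal.Quotient.mk_surjective b
  obtain ⟨C, hC⟩ := Ideal.Quotient.mk_surjective.exists.mp hab
  obtain ⟨S, hS⟩ := Ideal.Quotient.mk_surjective.exists.mp hba
  rw [← map_mul, Ideal.Quotient.eq, Ideal.mem_span_singleton] at hC hS
  obtain ⟨s, hs, hAs⟩ := hsr.exists_isCoprime_dvd_sub_mul hm0 hC hS
  obtain ⟨u, hu⟩ := Ideal.Quotient.isUnit_mk_of_isCoprime hs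
  refine ⟨u, ?_⟩
  rwa [hu, ← map_mul, Ideal.Quotient.eq, Ideal.mem_span_singleton]

/-- In `R/mR`, mutually dividing elements are associates. -/
theorem associates_of_dvd_dvd_quotient
    {R : Type*} [CommRing R] [IsDomain R] [IsBezout R]
    (hsr : HasStableRange15 R)
    (m : R) (hm0 : m ≠ 0) (hmu : ¬ IsUnit m)
    (a b : R ⧸ Ideal.span {m}) (hab : a ∣ b) (hba : b ∣ a) :
    ∃ u : (R ⧸ Ideal.span {m})ˣ, a = b * u :=
  associates_of_dvd_dvd_quotient_general hsr m hm0 a b hab hba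
end

section
/- Let R be a commutative Bézout domain of stable range 1.5, m ∈ R neither zero nor a unit, and R_m = R/mR. Let φ₁, φ₂, …, φ_n ∈ R_m with φ₁ ∣ φ₂ ∣ ⋯ ∣ φ_n and φ_n ≠ 0. Then there exist elements ψ_{ij} ∈ R_m for 1 ≤ j < i ≤ n, each ψ_{ij} being a generating solution of the equation φ_i = φ_j·x, such that ψ_{i,i−1}·ψ_{i+1,i} = ψ_{i+1,i−1} for all i with 2 ≤ i ≤ n−1. -/
open Ideal (span)
open Ideal.Quotient (mk mk_surjective)

def IsGeneratingSolution {S : Type*} [CommMonoid S] (a b w : S) : Prop :=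
  b = a * w ∧ ∀ x, b = a * x → w ∣ x

lemma dvd_of_forall_dvd_succ {M : Type*} [Monoid M] {f : ℕ → M} {n : ℕ}
    (h : ∀ i, 1 ≤ i → i < n → f i ∣ f (i + 1)) {i j : ℕ} (hj : 1 ≤ j) (hji : j ≤ i)
    (hin : i ≤ n) : f j ∣ f i := by
  induction i, hji using Nat.le_induction with
  | base => exact dvd_rfl
  | succ k hjk ih => exact (ih (by omega)).trans (h k (hj.trans hjk) (by omega))

section

variable {R : Type*} [CommRing R]

lemma isUnit_mk_of_isCoprime {m c : R} (h : IsCoprime c m) : IsUnit (mk (span {m}) c) := by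
  rw [← isCoprime_zero_right, ← Ideal.Quotient.mk_singleton_self m]
  exact h.map _

lemma dvd_of_mk_dvd_mk {m d d' : R} (hdm : d ∣ m) (h : mk (span {m}) d ∣ mk (span {m}) d') :
    d ∣ d' := by
  obtain ⟨x, hx⟩ := h
  obtain ⟨x, rfl⟩ := mk_surjective x
  rw [← map_mul, Ideal.Quotient.mk_eq_mk_iff_sub_mem, Ideal.mem_span_singleton] at hx
  exact (dvd_sub_left (dvd_mul_right d x)).mp (hdm.trans hx)

variable [IsDomain R]

lemma mk_dvd_of_mk_mul_eq_zero {m d e : R} (hm : m ≠ 0) (hde : d * e ∣ m)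
    {y : R ⧸ span {m}} (hy : mk (span {m}) d * y = 0) : mk (span {m}) e ∣ y := by
  obtain ⟨y, rfl⟩ := mk_surjective y
  rw [← map_mul, Ideal.Quotient.eq_zero_iff_dvd] at hy
  have hd : d ≠ 0 := by
    rintro rfl
    exact hm (zero_dvd_iff.mp (zero_mul e ▸ hde))
  exact map_dvd _ ((mul_dvd_mul_iff_left hd).mp (hde.trans hy))

lemma isGeneratingSolution_mk {m d e : R} (hm : m ≠ 0) (hde : d * e ∣ m)
    (u v : (R ⧸ span {m})ˣ) :
    IsGeneratingSolution (mk (span {m}) d * u) (mk (span {m}) (d * e) * v)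
      (mk (span {m}) e * ↑(v / u)) := by
  rw [div_eq_mul_inv, Units.val_mul, map_mul]
  refine ⟨by linear_combination (-(mk (span {m}) d * mk (span {m}) e * v)) * u.mul_inv,
    fun x hx => ?_⟩
  have hann : mk (span {m}) d * (u * x - mk (span {m}) e * v) = 0 := by
    linear_combination -hx
  have hux : mk (span {m}) e ∣ u * x :=
    (dvd_sub_left (dvd_mul_right _ _)).mp (mk_dvd_of_mk_mul_eq_zero hm hde hann)
  rw [← mul_assoc, Units.mul_right_dvd, Units.mul_right_dvd]
  exact Units.dvd_mul_left.mp hux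

variable [IsBezout R]

lemma exists_dvd_associated_mk (hsr : HasStableRange15 R) {m : R} (hm : m ≠ 0)
    (x : R ⧸ span {m}) : ∃ d, d ∣ m ∧ Associated (mk (span {m}) d) x := by
  obtain ⟨x, rfl⟩ := mk_surjective x
  set g := IsBezout.gcd x m
  obtain ⟨c, hc⟩ : g ∣ x := IsBezout.gcd_dvd_left x m
  obtain ⟨M, hM⟩ : g ∣ m := IsBezout.gcd_dvd_right x m
  have hg : g ≠ 0 := fun h => hm (by rw [hM, h, zero_mul])
  have hcM : ∀ t, t ∣ c → t ∣ M → t ∣ m → IsUnit t := fun t htc htM _ => by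
    have hgt : g * t ∣ g * 1 := by
      rw [mul_one]
      exact IsBezout.dvd_gcd (hc ▸ mul_dvd_mul_left g htc) (hM ▸ mul_dvd_mul_left g htM)
    exact isUnit_of_dvd_one ((mul_dvd_mul_iff_left hg).mp hgt)
  obtain ⟨r, hr⟩ := hsr c M m hm hcM
  have hunit := isUnit_mk_of_isCoprime (IsRelPrime.isCoprime fun t h₁ h₂ => hr t h₁ h₂)
  refine ⟨g, hM ▸ dvd_mul_right g M, hunit.unit, ?_⟩
  rw [IsUnit.unit_spec, ← map_mul, Ideal.Quotient.mk_eq_mk_iff_sub_mem, Ideal.mem_span_singleton]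
  exact ⟨r, by linear_combination -hc - r * hM⟩

end

theorem exists_compatible_generating_solutions_general
    {R : Type*} [CommRing R] [IsDomain R] [IsBezout R]
    (hsr : HasStableRange15 R)
    (m : R) (hm0 : m ≠ 0)
    (n : ℕ) (φ : ℕ → R ⧸ Ideal.span {m})
    (hchain : ∀ i : ℕ, 1 ≤ i → i < n → φ i ∣ φ (i + 1)) :
    ∃ ψ : ℕ → ℕ → R ⧸ Ideal.span {m},
      (∀ i j : ℕ, 1 ≤ j → j < i → i ≤ n →
        φ i = φ j * ψ i j ∧
        ∀ x : R ⧸ Ideal.span {m}, φ i = φ j * x → ψ i j ∣ x) ∧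
      (∀ i : ℕ, 2 ≤ i → i ≤ n - 1 →
        ψ i (i - 1) * ψ (i + 1) i = ψ (i + 1) (i - 1)) := by
  choose d hdm u hu using fun i => exists_dvd_associated_mk hsr hm0 (φ i)
  have hd0 : ∀ i, d i ≠ 0 := fun i h => hm0 (zero_dvd_iff.mp (h ▸ hdm i))
  have hdd : ∀ i j, 1 ≤ j → j ≤ i → i ≤ n → d j ∣ d i := by
    intro i j hj hji hin
    have hφ := dvd_of_forall_dvd_succ hchain hj hji hin
    rw [← hu i, ← hu j, Units.mul_right_dvd, Units.dvd_mul_right] at hφ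
    exact dvd_of_mk_dvd_mk (hdm j) hφ
  choose! e he using hdd
  refine ⟨fun i j => mk (span {m}) (e i j) * ↑(u i / u j), fun i j hj hji hin => ?_,
    fun i hi hin => ?_⟩
  · have hgen := isGeneratingSolution_mk hm0 (he i j hj hji.le hin ▸ hdm i) (u j) (u i)
    rwa [← he i j hj hji.le hin, hu, hu] at hgen
  · have he' : e (i + 1) (i - 1) = e i (i - 1) * e (i + 1) i := by
      refine mul_left_cancel₀ (hd0 (i - 1)) ?_
      rw [← he _ _ (by omega) (by omega) (by omega), ← mul_assoc,
        ← he _ _ (by omega) (by omega) (by omega), ← he _ _ (by omega) (by omega) (by omega)]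
    simp only [he', map_mul, ← div_mul_div_cancel (u (i + 1)) (u i) (u (i - 1)), Units.val_mul]
    ring

/-- For a divisibility chain `φ₁ ∣ φ₂ ∣ ⋯ ∣ φ_n ≠ 0` in `R/mR`, there is a choice of
generating solutions `ψ i j` of the equations `φ_i = φ_j * x` (for `1 ≤ j < i ≤ n`)
satisfying `ψ i (i-1) * ψ (i+1) i = ψ (i+1) (i-1)` for `2 ≤ i ≤ n - 1`. -/
theorem exists_compatible_generating_solutions
    {R : Type*} [CommRing R] [IsDomain R] [IsBezout R]
    (hsr : HasStableRange15 R)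
    (m : R) (hm0 : m ≠ 0) (hmu : ¬ IsUnit m)
    (n : ℕ) (φ : ℕ → R ⧸ Ideal.span {m})
    (hchain : ∀ i : ℕ, 1 ≤ i → i < n → φ i ∣ φ (i + 1))
    (hφn : φ n ≠ 0) :
    ∃ ψ : ℕ → ℕ → R ⧸ Ideal.span {m},
      (∀ i j : ℕ, 1 ≤ j → j < i → i ≤ n →
        φ i = φ j * ψ i j ∧
        ∀ x : R ⧸ Ideal.span {m}, φ i = φ j * x → ψ i j ∣ x) ∧
      (∀ i : ℕ, 2 ≤ i → i ≤ n - 1 →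
        ψ i (i - 1) * ψ (i + 1) i = ψ (i + 1) (i - 1)) :=
  exists_compatible_generating_solutions_general hsr m hm0 n φ hchain
end

section
/- Let R be a commutative Bézout domain of stable range 1.5, m ∈ R neither zero nor a unit, and R_m = R/mR. Let n ≥ 2 and Φ = diag(φ₁, …, φ_n) over R_m with φ₁ ∣ φ₂ ∣ ⋯ ∣ φ_n and φ_n ≠ 0. Let H be an invertible n×n matrix over R_m such that for every pair i > j the (i, j) entry of H is divisible by some generating solution ψ_{ij} of the equation φ_i = φ_j·x in R_m. Then H belongs to the Zelisko group G_Φ, i.e., there exists an invertible matrix S over R_m with H·Φ = Φ·S. -/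
def HasStableRangeOne (S : Type*) [CommRing S] : Prop :=
  ∀ a b : S, IsCoprime a b → ∃ r : S, IsUnit (a + b * r)

theorem HasStableRangeOne.associated_of_dvd_of_dvd {S : Type*} [CommRing S]
    (hS : HasStableRangeOne S) {a b : S} (hab : a ∣ b) (hba : b ∣ a) : Associated a b := by
  obtain ⟨t, rfl⟩ := hab
  obtain ⟨s, hs⟩ := hba
  obtain ⟨r, hu⟩ := hS t (1 - t * s) ⟨s, 1, by ring⟩
  -- `a * (1 - t * s) = 0`, so the correction term does not change `a * t`.
  refine ⟨hu.unit, ?_⟩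
  rw [IsUnit.unit_spec]
  linear_combination r * hs

section Quotient

variable {R : Type*} [CommRing R] {m : R}

theorem IsCoprime.isUnit_quotient_mk {x : R} (h : IsCoprime x m) :
    IsUnit (Ideal.Quotient.mk (Ideal.span {m}) x) := by
  obtain ⟨a, b, hab⟩ := h
  refine IsUnit.of_mul_eq_one_right (Ideal.Quotient.mk _ a) ?_
  rw [← map_mul, ← map_one (Ideal.Quotient.mk _), Ideal.Quotient.eq, Ideal.mem_span_singleton]
  exact ⟨-b, by linear_combination hab⟩

theorem dvd_of_quotient_mk_dvd {f x : R} (hf : f ∣ m)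
    (h : Ideal.Quotient.mk (Ideal.span {m}) f ∣ Ideal.Quotient.mk (Ideal.span {m}) x) :
    f ∣ x := by
  obtain ⟨c, hc⟩ := h
  obtain ⟨c, rfl⟩ := Ideal.Quotient.mk_surjective c
  rw [← map_mul, Ideal.Quotient.eq, Ideal.mem_span_singleton] at hc
  exact (dvd_sub_right (dvd_mul_right f c)).mp (hf.trans (dvd_sub_comm.mp hc))

variable [IsBezout R]

theorem HasStableRange15.hasStableRangeOne_quotient (hsr : HasStableRange15 R) (hm : m ≠ 0) :
    HasStableRangeOne (R ⧸ Ideal.span {m}) := by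
  intro a b ⟨s, t, hst⟩
  obtain ⟨a, rfl⟩ := Ideal.Quotient.mk_surjective a
  obtain ⟨b, rfl⟩ := Ideal.Quotient.mk_surjective b
  obtain ⟨s, rfl⟩ := Ideal.Quotient.mk_surjective s
  obtain ⟨t, rfl⟩ := Ideal.Quotient.mk_surjective t
  rw [← map_mul, ← map_mul, ← map_add, ← map_one (Ideal.Quotient.mk _), Ideal.Quotient.eq,
    Ideal.mem_span_singleton] at hst
  obtain ⟨k, hk⟩ := hst
  obtain ⟨r, hr⟩ := hsr a b m hm fun d hda hdb hdm => isUnit_of_dvd_one <| by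
    have : (1 : R) = s * a + t * b - m * k := by linear_combination -hk
    rw [this]
    exact dvd_sub (dvd_add (hda.mul_left s) (hdb.mul_left t)) (hdm.mul_right k)
  refine ⟨Ideal.Quotient.mk _ r, ?_⟩
  rw [← map_mul, ← map_add]
  exact IsRelPrime.isCoprime (fun d hd hdm => hr d hd hdm) |>.isUnit_quotient_mk

theorem exists_dvd_associated_quotient_mk (hR : HasStableRangeOne (R ⧸ Ideal.span {m}))
    (x : R ⧸ Ideal.span {m}) :
    ∃ f : R, f ∣ m ∧ Associated (Ideal.Quotient.mk (Ideal.span {m}) f) x := by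
  obtain ⟨g, rfl⟩ := Ideal.Quotient.mk_surjective x
  refine ⟨IsBezout.gcd g m, IsBezout.gcd_dvd_right g m,
    hR.associated_of_dvd_of_dvd (map_dvd _ (IsBezout.gcd_dvd_left g m)) ?_⟩
  obtain ⟨a, b, hab⟩ := IsBezout.gcd_eq_sum g m
  refine ⟨Ideal.Quotient.mk _ a, ?_⟩
  rw [← hab, ← map_mul, Ideal.Quotient.eq, Ideal.mem_span_singleton]
  exact ⟨b, by ring⟩

end Quotient

namespace Matrix

variable {n : Type*} [Fintype n] [DecidableEq n]

theorem det_eq_of_diagonal_mul_eq_mul_diagonal {R : Type*} [CommRing R] [IsDomain R]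
    {f : n → R} (hf : ∀ i, f i ≠ 0) {T L : Matrix n n R}
    (h : diagonal f * T = L * diagonal f) : T.det = L.det := by
  have hdet := congrArg det h
  rw [det_mul, det_mul, mul_comm L.det] at hdet
  exact mul_left_cancel₀ (by simpa [det_diagonal, Finset.prod_ne_zero_iff] using hf) hdet

theorem exists_isUnit_mul_diagonal_eq_diagonal_mul_of_dvd {R : Type*} [CommRing R] [IsDomain R]
    {m : R} (hm : m ≠ 0) {f : n → R} (hf : ∀ i, f i ∣ m)
    {H : Matrix n n (R ⧸ Ideal.span {m})} (hH : IsUnit H)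
    (hdvd : ∀ i j, Ideal.Quotient.mk _ (f i) ∣ H i j * Ideal.Quotient.mk _ (f j)) :
    ∃ S : Matrix n n (R ⧸ Ideal.span {m}), IsUnit S ∧
      H * diagonal (fun i => Ideal.Quotient.mk _ (f i)) =
        diagonal (fun i => Ideal.Quotient.mk _ (f i)) * S := by
  set π := Ideal.Quotient.mk (Ideal.span {m})
  choose L hL using fun i j => Ideal.Quotient.mk_surjective (H i j)
  have hLH : π.mapMatrix (of L) = H := ext fun i j => hL i j
  choose T hT using fun i j =>
    dvd_of_quotient_mk_dvd (x := L i j * f j) (hf i) (by rw [map_mul, hL]; exact hdvd i j)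
  have hTL : diagonal f * of T = of L * diagonal f :=
    ext fun i j => by simp [diagonal_mul, mul_diagonal, hT]
  have hf0 : ∀ i, f i ≠ 0 := fun i h => hm (zero_dvd_iff.mp (h ▸ hf i))
  refine ⟨π.mapMatrix (of T), ?_, ?_⟩
  · rw [isUnit_iff_isUnit_det, ← RingHom.map_det, det_eq_of_diagonal_mul_eq_mul_diagonal hf0 hTL,
      RingHom.map_det, hLH, ← isUnit_iff_isUnit_det]
    exact hH
  · have := congrArg π.mapMatrix hTL
    simp only [map_mul, RingHom.mapMatrix_apply, diagonal_map (map_zero π)] at this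
    rw [← hLH]
    exact this.symm

theorem exists_isUnit_mul_diagonal_eq_diagonal_mul_of_associated {S : Type*} [CommRing S]
    {g φ : n → S} (hgφ : ∀ i, Associated (g i) (φ i)) {H : Matrix n n S}
    (hH : ∃ T : Matrix n n S, IsUnit T ∧ H * diagonal g = diagonal g * T) :
    ∃ T : Matrix n n S, IsUnit T ∧ H * diagonal φ = diagonal φ * T := by
  obtain ⟨T, hT, hHT⟩ := hH
  choose u hu using hgφ
  have hU : IsUnit (diagonal fun i => (u i : S)) :=
    isUnit_diagonal.mpr (Pi.isUnit_iff.mpr fun i => (u i).isUnit)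
  set U := hU.unit
  have hφ : diagonal φ = diagonal g * U := by
    rw [hU.unit_spec, diagonal_mul_diagonal]; exact congrArg diagonal (funext hu).symm
  refine ⟨(U⁻¹ : (Matrix n n S)ˣ) * T * U, (U⁻¹.isUnit.mul hT).mul U.isUnit, ?_⟩
  rw [hφ, ← mul_assoc, hHT]
  simp only [mul_assoc, Units.mul_inv_cancel_left]

end Matrix

theorem Fin.dvd_of_le_of_forall_dvd_succ {M : Type*} [Monoid M] {n : ℕ} {φ : Fin n → M}
    (h : ∀ i : Fin n, ∀ h : (i : ℕ) + 1 < n, φ i ∣ φ ⟨i + 1, h⟩) {i j : Fin n} (hij : i ≤ j) :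
    φ i ∣ φ j := by
  obtain ⟨j, hj⟩ := j
  replace hij : (i : ℕ) ≤ j := hij
  induction j, hij using Nat.le_induction with
  | base => exact dvd_rfl
  | succ j hij ih => exact (ih (by omega)).trans (h ⟨j, by omega⟩ hj)

/-- If `H` is an invertible matrix over `R/mR` whose `(i, j)` entry for each `i > j` is
divisible by some generating solution of `φ_i = φ_j * x` (where `φ₁ ∣ ⋯ ∣ φ_n ≠ 0`),
then `H` belongs to the Zelisko group of `Φ = diag(φ₁, …, φ_n)`. -/
theorem mem_zelisko_of_entries_divisible
    {R : Type*} [CommRing R] [IsDomain R] [IsBezout R]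
    (hsr : HasStableRange15 R)
    (m : R) (hm0 : m ≠ 0)
    (n : ℕ)
    (φ : Fin n → R ⧸ Ideal.span {m})
    (hchain : ∀ i : Fin n, ∀ h : (i : ℕ) + 1 < n, φ i ∣ φ ⟨(i : ℕ) + 1, h⟩)
    (H : Matrix (Fin n) (Fin n) (R ⧸ Ideal.span {m})) (hH : IsUnit H)
    (hdiv : ∀ i j : Fin n, j < i →
      ∃ ψ : R ⧸ Ideal.span {m},
        φ i = φ j * ψ ∧
        (∀ x : R ⧸ Ideal.span {m}, φ i = φ j * x → ψ ∣ x) ∧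
        ψ ∣ H i j) :
    ∃ S : Matrix (Fin n) (Fin n) (R ⧸ Ideal.span {m}),
      IsUnit S ∧ H * Matrix.diagonal φ = Matrix.diagonal φ * S := by
  have hentry : ∀ i j, φ i ∣ H i j * φ j := by
    intro i j
    rcases le_or_gt i j with hij | hji
    · exact (Fin.dvd_of_le_of_forall_dvd_succ hchain hij).mul_left _
    · obtain ⟨ψ, hψ, -, e, he⟩ := hdiv i j hji
      exact ⟨e, by rw [he, hψ]; ring⟩
  choose f hfm hf using fun i =>
    exists_dvd_associated_quotient_mk (hsr.hasStableRangeOne_quotient hm0) (φ i)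
  refine Matrix.exists_isUnit_mul_diagonal_eq_diagonal_mul_of_associated hf ?_
  exact Matrix.exists_isUnit_mul_diagonal_eq_diagonal_mul_of_dvd hm0 hfm hH fun i j =>
    (hf i).dvd.trans ((hentry i j).trans (mul_dvd_mul_left _ (hf j).symm.dvd))
end
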